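/- arXiv:2107.06444 — 4 statements merged into one kernel-verified Lean document; each statement's English description precedes it below -/
import Mathlib

section
/- Let A be a well-founded meet semilattice, H a Hilbert space, and (H_a)_{a∈A} a monotone family of closed subspaces of H with π_a the orthogonal projection of H onto H_a. If π_a ∘ π_b = π_{a∧b} for all a, b ∈ A, then (H_a)_{a∈A} is decomposable. -/
open Submodule

variable {𝕜 E : Type*} [RCLike 𝕜] [NormedAddCommGroup E] [InnerProductSpace 𝕜 E]
  [CompleteSpace E]

/-- The orthogonal projection of `E` onto the topological closure of `K`,
as a continuous linear map `E →L[𝕜] E`. -/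
noncomputable def projC (K : Submodule 𝕜 E) : E →L[𝕜] E :=
  haveI : CompleteSpace K.topologicalClosure :=
    K.isClosed_topologicalClosure.completeSpace_coe
  K.topologicalClosure.subtypeL.comp (orthogonalProjection K.topologicalClosure)

/-- A monotone family `(H_a)_{a ∈ A}` of closed subspaces of `E` is decomposable if there is
a family `(S_a)_{a ∈ A⁺}` of pairwise orthogonal closed subspaces whose total closed span is
`E` and whose partial closed spans over `{b ≤ a}` recover each `H_a`. -/
def Decomposable {A : Type*} [PartialOrder A] (H : A → Submodule 𝕜 E) : Prop :=
  ∃ S : WithTop A → Submodule 𝕜 E,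
    (∀ a, IsClosed ((S a : Submodule 𝕜 E) : Set E)) ∧
    (∀ a b, a ≠ b → ∀ u ∈ S a, ∀ v ∈ S b, (inner 𝕜 u v : 𝕜) = 0) ∧
    (⨆ a, S a).topologicalClosure = ⊤ ∧
    (∀ a : A, (⨆ b ∈ {b : A | b ≤ a}, S (b : WithTop A)).topologicalClosure = H a)

/-!
Take `S a = H a ⊖ span {H b | b < a}` and `S ⊤ = (⋃ a, H a)ᗮ`. If `a ⊓ b < b`, then for
`u ∈ H a` and `v ∈ S b` the identity `π_b π_a = π_{a ⊓ b}` gives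
`⟪u, v⟫ = ⟪π_b u, v⟫ = ⟪π_{a ⊓ b} u, v⟫ = 0`, because `H (a ⊓ b)` lies strictly below `b`;
if instead `a ⊓ b = b`, then `b < a` and the roles are swapped. Well-founded induction shows
that `H a` is the closed span of the `S b` with `b ≤ a`, since `H a` splits as the closed span
of the `H b`, `b < a`, plus its orthogonal complement in `H a`, which is `S a`.
-/

theorem projC_eq_starProjection (K : Submodule 𝕜 E) :
    projC K = K.topologicalClosure.starProjection :=
  rfl

theorem isOrtho_inf_orthogonal_of_projC_comp {K L M : Submodule 𝕜 E}
    (h : projC K ∘L projC L = projC M) : L ⟂ K ⊓ Mᗮ := by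
  rw [isOrtho_iff_inner_eq]
  rintro u hu v ⟨hvK, hvM⟩
  simp only [projC_eq_starProjection] at h
  calc (inner 𝕜 u v : 𝕜)
      = inner 𝕜 u (K.topologicalClosure.starProjection v) := by
        rw [starProjection_eq_self_iff.2 (K.le_topologicalClosure hvK)]
    _ = inner 𝕜 (K.topologicalClosure.starProjection u) v :=
        (inner_starProjection_left_eq_right _ _ _).symm
    _ = inner 𝕜 (K.topologicalClosure.starProjection
          (L.topologicalClosure.starProjection u)) v := by
        rw [starProjection_eq_self_iff.2 (L.le_topologicalClosure hu)]
    _ = inner 𝕜 (M.topologicalClosure.starProjection u) v := by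
        rw [← h, ContinuousLinearMap.comp_apply]
    _ = 0 := inner_right_of_mem_orthogonal (starProjection_apply_mem _ u)
        (by rwa [orthogonal_closure M])

noncomputable def orthogonalIncrement {A : Type*} [LT A] (H : A → Submodule 𝕜 E) :
    WithTop A → Submodule 𝕜 E
  | ⊤ => (⨆ a, H a)ᗮ
  | (a : A) => H a ⊓ (⨆ b < a, H b)ᗮ

section LT

variable {A : Type*} [LT A] {H : A → Submodule 𝕜 E}

omit [CompleteSpace E] in
theorem isClosed_orthogonalIncrement (hclosed : ∀ a, IsClosed (H a : Set E)) (a : WithTop A) :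
    IsClosed (orthogonalIncrement H a : Set E) := by
  cases a with
  | top => exact isClosed_orthogonal _
  | coe a => exact (hclosed a).inter (isClosed_orthogonal _)

omit [CompleteSpace E] in
theorem isOrtho_orthogonalIncrement_top (a : A) :
    orthogonalIncrement H ⊤ ⟂ orthogonalIncrement H a :=
  (isOrtho_orthogonal_left _).mono_right (inf_le_left.trans (le_iSup H a))

end LT

section SemilatticeInf

variable {A : Type*} [SemilatticeInf A] {H : A → Submodule 𝕜 E}

theorem isOrtho_orthogonalIncrement_of_inf_lt
    (hproj : ∀ a b : A, projC (H a) ∘L projC (H b) = projC (H (a ⊓ b)))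
    {a b : A} (hab : a ⊓ b < b) :
    orthogonalIncrement H a ⟂ orthogonalIncrement H b := by
  have hinf : H (b ⊓ a) ≤ ⨆ c < b, H c := le_iSup₂_of_le (b ⊓ a) (inf_comm a b ▸ hab) le_rfl
  exact (isOrtho_inf_orthogonal_of_projC_comp (hproj b a)).mono inf_le_left
    (inf_le_inf_left _ (orthogonal_le hinf))

theorem pairwise_isOrtho_orthogonalIncrement
    (hproj : ∀ a b : A, projC (H a) ∘L projC (H b) = projC (H (a ⊓ b))) :
    Pairwise fun a b => orthogonalIncrement H a ⟂ orthogonalIncrement H b := by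
  intro a b hab
  cases a with
  | top =>
    cases b with
    | top => exact absurd rfl hab
    | coe b => exact isOrtho_orthogonalIncrement_top b
  | coe a =>
    cases b with
    | top => exact (isOrtho_orthogonalIncrement_top a).symm
    | coe b =>
      rcases (inf_le_right : a ⊓ b ≤ b).lt_or_eq with hlt | heq
      · exact isOrtho_orthogonalIncrement_of_inf_lt hproj hlt
      · have hba : b < a := (heq ▸ inf_le_left : b ≤ a).lt_of_ne fun h => hab (by rw [h])
        exact (isOrtho_orthogonalIncrement_of_inf_lt hproj
          (by rwa [inf_eq_left.2 hba.le])).symm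

end SemilatticeInf

section Preorder

variable {A : Type*} [Preorder A] {H : A → Submodule 𝕜 E}

theorem topologicalClosure_biSup_orthogonalIncrement
    (hwf : WellFounded ((· < ·) : A → A → Prop))
    (hclosed : ∀ a, IsClosed (H a : Set E)) (hmono : Monotone H) (a : A) :
    (⨆ b ≤ a, orthogonalIncrement H b).topologicalClosure = H a := by
  induction a using hwf.induction with
  | _ a ih =>
  set N := ⨆ b ≤ a, orthogonalIncrement H b
  set P := ⨆ b < a, H b
  refine le_antisymm (topologicalClosure_minimal _
    (iSup₂_le fun b hb => inf_le_left.trans (hmono hb)) (hclosed a)) ?_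
  have hP : P.topologicalClosure ≤ H a :=
    topologicalClosure_minimal _ (iSup₂_le fun b hb => hmono hb.le) (hclosed a)
  have hPN : P.topologicalClosure ≤ N.topologicalClosure := by
    refine topologicalClosure_minimal _ (iSup₂_le fun b hb => ?_) N.isClosed_topologicalClosure
    rw [← ih b hb]
    exact topologicalClosure_mono (iSup₂_le fun c hc => le_iSup₂_of_le c (hc.trans hb.le) le_rfl)
  have hS : orthogonalIncrement H a ≤ N.topologicalClosure :=
    (le_iSup₂ (f := fun b (_ : b ≤ a) => orthogonalIncrement H b) a le_rfl).trans
      N.le_topologicalClosure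
  calc H a = P.topologicalClosure ⊔ P.topologicalClosureᗮ ⊓ H a :=
        (sup_orthogonal_inf_of_hasOrthogonalProjection hP).symm
    _ = P.topologicalClosure ⊔ orthogonalIncrement H a := by
        rw [orthogonal_closure, inf_comm]; rfl
    _ ≤ N.topologicalClosure := sup_le hPN hS

theorem topologicalClosure_iSup_orthogonalIncrement
    (hwf : WellFounded ((· < ·) : A → A → Prop))
    (hclosed : ∀ a, IsClosed (H a : Set E)) (hmono : Monotone H) :
    (⨆ a, orthogonalIncrement H a).topologicalClosure = ⊤ := by
  set T := (⨆ a, orthogonalIncrement H a).topologicalClosure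
  set K := ⨆ a, H a
  have hH : ∀ a, H a ≤ T := fun a => by
    rw [← topologicalClosure_biSup_orthogonalIncrement hwf hclosed hmono a]
    exact topologicalClosure_mono (iSup₂_le fun b _ => le_iSup (orthogonalIncrement H) b)
  have hK : K.topologicalClosure ≤ T :=
    topologicalClosure_minimal _ (iSup_le hH) (isClosed_topologicalClosure _)
  have hKperp : K.topologicalClosureᗮ ≤ T := by
    rw [orthogonal_closure]
    exact (le_iSup (orthogonalIncrement H) ⊤).trans (le_topologicalClosure _)
  rw [eq_top_iff, ← sup_orthogonal_of_hasOrthogonalProjection (K := K.topologicalClosure)]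
  exact sup_le hK hKperp

end Preorder

/-- Let `A` be a well-founded meet semilattice and `(H_a)_{a ∈ A}` a
monotone family of closed subspaces of a Hilbert space, with `π_a` the orthogonal
projection onto `H_a`.  If `π_a ∘ π_b = π_{a ⊓ b}` for all `a, b`, then the family is
decomposable. -/
theorem decomposable_of_proj_inf
    {A : Type*} [SemilatticeInf A]
    (hwf : WellFounded ((· < ·) : A → A → Prop))
    (H : A → Submodule 𝕜 E)
    (hclosed : ∀ a, IsClosed ((H a : Submodule 𝕜 E) : Set E))
    (hmono : Monotone H)
    (hproj : ∀ a b : A, (projC (H a)).comp (projC (H b)) = projC (H (a ⊓ b))) :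
    Decomposable H :=
  ⟨orthogonalIncrement H, isClosed_orthogonalIncrement hclosed,
    fun _ _ hab => isOrtho_iff_inner_eq.1 (pairwise_isOrtho_orthogonalIncrement hproj hab),
    topologicalClosure_iSup_orthogonalIncrement hwf hclosed hmono,
    topologicalClosure_biSup_orthogonalIncrement hwf hclosed hmono⟩
end

section
/- Let A be any poset, H a Hilbert space, and (H_a)_{a∈A} a monotone family of closed subspaces of H. If (H_a)_{a∈A} is decomposable, then it satisfies the intersection property: for all a, b ∈ A, π({c ∈ A : c ≤ a and c ≤ b}) = π_a ∘ π_b. -/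
open Submodule

variable {𝕜 E : Type*} [RCLike 𝕜] [NormedAddCommGroup E] [InnerProductSpace 𝕜 E]
  [CompleteSpace E]

/-- `π(B)`: the orthogonal projection onto the closed span of the `H b`, `b ∈ B`. -/
noncomputable def piProj {A : Type*} [PartialOrder A] (H : A → Submodule 𝕜 E)
    (B : Set A) : E →L[𝕜] E :=
  projC (⨆ b ∈ B, H b)

/-!
For a lower set `B ⊆ A`, decomposability identifies `H(B)` with the closed span of the `S c`,
`c ∈ B`, so `π(B)` acts diagonally on the orthogonal decomposition `(S_c)_{c ∈ A⁺}`: as the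
identity on `S c` for `c ∈ B` and as zero on the others. Composing two such diagonal projections
gives the diagonal projection for the intersection of the index sets, and
`{c ≤ a} ∩ {c ≤ b}` is the index set of `π({c ≤ a ∧ c ≤ b})`.
-/

namespace Submodule

section Closure

variable {R M : Type*} [Ring R] [AddCommGroup M] [TopologicalSpace M] [Module R M]
  [IsTopologicalAddGroup M] [ContinuousConstSMul R M]

theorem topologicalClosure_biSup_topologicalClosure {ι : Type*} (K : ι → Submodule R M)
    (s : Set ι) :
    (⨆ i ∈ s, (K i).topologicalClosure).topologicalClosure = (⨆ i ∈ s, K i).topologicalClosure :=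
  le_antisymm
    (topologicalClosure_minimal _
      (iSup₂_le fun _ hi => topologicalClosure_mono (le_biSup K hi))
      (isClosed_topologicalClosure _))
    (topologicalClosure_mono (iSup₂_mono fun _ _ => le_topologicalClosure _))

end Closure

end Submodule

theorem IsLowerSet.biSup_biSup_Iic {A α : Type*} [Preorder A] [CompleteLattice α] {B : Set A}
    (hB : IsLowerSet B) (f : A → α) :
    ⨆ c ∈ B, ⨆ d ∈ {d : A | d ≤ c}, f d = ⨆ d ∈ B, f d :=
  le_antisymm (iSup₂_le fun _ hc => iSup₂_le fun _ hd => le_biSup f (hB hd hc))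
    (iSup₂_mono' fun d hd => ⟨d, hd, le_biSup f (le_refl d)⟩)

theorem projC_eq_starProjection_s2 (K : Submodule 𝕜 E) :
    haveI : CompleteSpace K.topologicalClosure := K.isClosed_topologicalClosure.completeSpace_coe
    projC K = K.topologicalClosure.starProjection :=
  rfl

theorem projC_congr {K L : Submodule 𝕜 E} (h : K.topologicalClosure = L.topologicalClosure) :
    projC K = projC L := by
  rw [projC_eq_starProjection_s2, projC_eq_starProjection_s2]
  congr 1

section OrthogonalFamily

variable {ι : Type*} {S : ι → Submodule 𝕜 E} {T : Set ι} {i : ι} {x : E}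

theorem projC_biSup_apply_of_mem (hi : i ∈ T) (hx : x ∈ S i) : projC (⨆ j ∈ T, S j) x = x := by
  rw [projC_eq_starProjection_s2, starProjection_eq_self_iff]
  exact le_topologicalClosure _ (le_biSup S hi hx)

theorem projC_biSup_apply_of_notMem (hS : Pairwise fun i j => S i ⟂ S j) (hi : i ∉ T)
    (hx : x ∈ S i) : projC (⨆ j ∈ T, S j) x = 0 := by
  have hortho : S i ⟂ ⨆ j ∈ T, S j :=
    isOrtho_iSup_right.2 fun j => isOrtho_iSup_right.2 fun hj =>
      hS (ne_of_mem_of_not_mem hj hi).symm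
  rw [projC_eq_starProjection_s2, starProjection_apply_eq_zero_iff,
    orthogonal_closure]
  exact hortho hx

theorem projC_biSup_inter (hS : Pairwise fun i j => S i ⟂ S j)
    (hdense : (⨆ i, S i).topologicalClosure = ⊤) (U V : Set ι) :
    projC (⨆ i ∈ U ∩ V, S i) = projC (⨆ i ∈ U, S i) ∘L projC (⨆ i ∈ V, S i) := by
  refine ContinuousLinearMap.ext_on (s := ⋃ i, (S i : Set E)) ?_ fun x hx => ?_
  · rw [← iSup_eq_span]
    exact dense_iff_topologicalClosure_eq_top.2 hdense
  obtain ⟨i, hx⟩ := Set.mem_iUnion.1 hx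
  rw [ContinuousLinearMap.comp_apply]
  by_cases hV : i ∈ V
  · rw [projC_biSup_apply_of_mem hV hx]
    by_cases hU : i ∈ U
    · rw [projC_biSup_apply_of_mem (Set.mem_inter hU hV) hx, projC_biSup_apply_of_mem hU hx]
    · rw [projC_biSup_apply_of_notMem hS (fun h => hU h.1) hx,
        projC_biSup_apply_of_notMem hS hU hx]
  · rw [projC_biSup_apply_of_notMem hS (fun h => hV h.2) hx,
      projC_biSup_apply_of_notMem hS hV hx, map_zero]

end OrthogonalFamily

theorem piProj_eq_projC_biSup {A : Type*} [PartialOrder A] {H : A → Submodule 𝕜 E}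
    {S : WithTop A → Submodule 𝕜 E}
    (hH : ∀ a : A, (⨆ b ∈ {b : A | b ≤ a}, S b).topologicalClosure = H a)
    {B : Set A} (hB : IsLowerSet B) :
    piProj H B = projC (⨆ i ∈ ((↑) : A → WithTop A) '' B, S i) := by
  refine projC_congr ?_
  simp_rw [iSup_image, ← hH, topologicalClosure_biSup_topologicalClosure,
    hB.biSup_biSup_Iic]

theorem intersectionProperty_of_decomposable_general
    {A : Type*} [PartialOrder A]
    (H : A → Submodule 𝕜 E)
    (hdec : Decomposable H) :
    ∀ a b : A,
      piProj H {c | c ≤ a ∧ c ≤ b} =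
        (piProj H {c | c ≤ a}).comp (piProj H {c | c ≤ b}) := by
  obtain ⟨S, -, horth, hdense, hH⟩ := hdec
  have hS : Pairwise fun i j => S i ⟂ S j := fun i j hij =>
    isOrtho_iff_inner_eq.2 (horth i j hij)
  have hIic : ∀ a : A, IsLowerSet {c | c ≤ a} := isLowerSet_Iic
  intro a b
  rw [Set.ofPred_and, piProj_eq_projC_biSup hH ((hIic a).inter (hIic b)),
    piProj_eq_projC_biSup hH (hIic a), piProj_eq_projC_biSup hH (hIic b),
    Set.image_inter WithTop.coe_injective]
  exact projC_biSup_inter hS hdense _ _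

/-- Over any poset, a decomposable monotone family of closed subspaces
satisfies the intersection property `π({c ≤ a ∧ c ≤ b}) = π_a ∘ π_b`. -/
theorem intersectionProperty_of_decomposable
    {A : Type*} [PartialOrder A]
    (H : A → Submodule 𝕜 E)
    (hclosed : ∀ a, IsClosed ((H a : Submodule 𝕜 E) : Set E))
    (hmono : Monotone H)
    (hdec : Decomposable H) :
    ∀ a b : A,
      piProj H {c | c ≤ a ∧ c ≤ b} =
        (piProj H {c | c ≤ a}).comp (piProj H {c | c ≤ b}) :=
  intersectionProperty_of_decomposable_general H hdec
end

section
/- Let A be any poset, H a Hilbert space, and (H_a)_{a∈A} a monotone family of closed subspaces of H satisfying the intersection property. Then the subspaces S_a := H_a ∩ ⋂_{b∈A⁺, b<a} H_b^⊥ (a ∈ A⁺) are pairwise orthogonal; equivalently, the orthogonal projections s_a^⊥ onto S_a satisfy s_a^⊥ ∘ s_b^⊥ = 0 whenever a ≠ b, and s_a^⊥ ∘ s_a^⊥ = s_a^⊥. -/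
open Submodule

variable {𝕜 E : Type*} [RCLike 𝕜] [NormedAddCommGroup E] [InnerProductSpace 𝕜 E]
  [CompleteSpace E]

/-- The intersection property: `π({c ≤ a} ∩ {c ≤ b}) = π_a ∘ π_b`. -/
def IntersectionProperty {A : Type*} [PartialOrder A] (H : A → Submodule 𝕜 E) : Prop :=
  ∀ a b : A,
    piProj H {c | c ≤ a ∧ c ≤ b} =
      (piProj H {c | c ≤ a}).comp (piProj H {c | c ≤ b})

/-- The extension of the family `(H_a)_{a ∈ A}` to `A⁺ = WithTop A`, sending the added
greatest element `⊤` to the whole space. -/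
def extFam {A : Type*} [PartialOrder A] (H : A → Submodule 𝕜 E) :
    WithTop A → Submodule 𝕜 E :=
  fun x => WithTop.recTopCoe ⊤ H x

/-- `S_a := H_a ∩ ⋂_{b ∈ A⁺, b < a} H_b^⊥` for `a ∈ A⁺`. -/
def interactionSub {A : Type*} [PartialOrder A] (H : A → Submodule 𝕜 E)
    (a : WithTop A) : Submodule 𝕜 E :=
  extFam H a ⊓ ⨅ b ∈ {b : WithTop A | b < a}, (extFam H b)ᗮ

/-!
Let `u ∈ S_a` and `v ∈ S_b` with `a ≠ b`. If `a` and `b` are comparable, say `b < a`, then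
`u ⊥ H_b ∋ v` by the definition of `S_a`. Otherwise both lie in `A`, and since `π_a u = u`,
`π_b v = v`, the intersection property gives
`⟪u, v⟫ = ⟪u, π_a v⟫ = ⟪u, π_a π_b v⟫ = ⟪u, π({c ≤ a, c ≤ b}) v⟫ = 0`,
because every `c` with `c ≤ a` and `c ≤ b` satisfies `c < a`, so `u` is orthogonal to `H_c`.
The statements about the projections follow from orthogonality of the `S_a`.
-/

section projC

theorem projC_apply_mem (K : Submodule 𝕜 E) (x : E) : projC K x ∈ K.topologicalClosure :=
  K.topologicalClosure.starProjection_apply_mem x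

theorem projC_apply_of_mem {K : Submodule 𝕜 E} {x : E} (hx : x ∈ K) : projC K x = x :=
  starProjection_eq_self_iff.2 (K.le_topologicalClosure hx)

theorem inner_projC_left (K : Submodule 𝕜 E) (u v : E) :
    inner 𝕜 (projC K u) v = inner 𝕜 u (projC K v) :=
  K.topologicalClosure.inner_starProjection_left_eq_right u v

theorem inner_projC_right_eq_zero {K : Submodule 𝕜 E} {u : E} (hu : u ∈ Kᗮ) (v : E) :
    inner 𝕜 u (projC K v) = 0 :=
  inner_left_of_mem_orthogonal (projC_apply_mem K v) (K.orthogonal_closure ▸ hu)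

omit [CompleteSpace E] in
theorem Submodule.IsOrtho.topologicalClosure {U V : Submodule 𝕜 E} (h : U ⟂ V) :
    U.topologicalClosure ⟂ V.topologicalClosure := by
  rw [isOrtho_iff_le, orthogonal_closure]
  exact topologicalClosure_minimal _ (isOrtho_iff_le.1 h) V.isClosed_orthogonal

theorem projC_comp_projC_of_isOrtho {U V : Submodule 𝕜 E} (h : U ⟂ V) :
    (projC U).comp (projC V) = 0 :=
  h.topologicalClosure.starProjection_comp_starProjection

theorem projC_comp_self (K : Submodule 𝕜 E) : (projC K).comp (projC K) = projC K :=
  K.topologicalClosure.isIdempotentElem_starProjection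

omit [CompleteSpace E] in
theorem mem_orthogonal_biSup {ι : Type*} {K : ι → Submodule 𝕜 E} {s : Set ι} {u : E}
    (hu : ∀ i ∈ s, u ∈ (K i)ᗮ) : u ∈ (⨆ i ∈ s, K i)ᗮ := by
  rw [show (⨆ i ∈ s, K i)ᗮ = ⨅ i ∈ s, (K i)ᗮ from (orthogonal_gc 𝕜 E).l_iSup₂]
  simpa only [mem_iInf] using hu

end projC

section interactionSub

variable {A : Type*} [PartialOrder A] {H : A → Submodule 𝕜 E}

theorem piProj_Iic_apply_of_mem {a : A} {v : E} (hv : v ∈ H a) :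
    piProj H {c | c ≤ a} v = v :=
  projC_apply_of_mem (mem_iSup_of_mem a (mem_iSup_of_mem le_rfl hv))

theorem inner_eq_zero_of_intersectionProperty (hint : IntersectionProperty H) {a b : A}
    (hab : ¬ a ≤ b) {u v : E} (hu : u ∈ H a) (hu_perp : ∀ c < a, u ∈ (H c)ᗮ)
    (hv : v ∈ H b) : inner 𝕜 u v = 0 := by
  have hu_inf : u ∈ (⨆ c ∈ {c | c ≤ a ∧ c ≤ b}, H c)ᗮ :=
    mem_orthogonal_biSup fun c hc ↦ hu_perp c <| hc.1.lt_of_ne fun hca ↦ hab (hca ▸ hc.2)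
  calc inner 𝕜 u v = inner 𝕜 (piProj H {c | c ≤ a} u) v := by
        rw [piProj_Iic_apply_of_mem hu]
    _ = inner 𝕜 u (piProj H {c | c ≤ a} (piProj H {c | c ≤ b} v)) := by
        rw [piProj_Iic_apply_of_mem hv]
        exact inner_projC_left _ u v
    _ = inner 𝕜 u (piProj H {c | c ≤ a ∧ c ≤ b} v) := by
        rw [hint, ContinuousLinearMap.comp_apply]
    _ = 0 := inner_projC_right_eq_zero hu_inf v

omit [CompleteSpace E] in
theorem mem_interactionSub {a : WithTop A} {u : E} :
    u ∈ interactionSub H a ↔ u ∈ extFam H a ∧ ∀ c < a, u ∈ (extFam H c)ᗮ := by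
  simp [interactionSub]

theorem interactionSub_isOrtho_of_not_le (hint : IntersectionProperty H) {a b : WithTop A}
    (hab : ¬ a ≤ b) : interactionSub H a ⟂ interactionSub H b := by
  rw [isOrtho_iff_inner_eq]
  intro u hu v hv
  obtain ⟨hu_mem, hu_perp⟩ := mem_interactionSub.1 hu
  obtain ⟨hv_mem, -⟩ := mem_interactionSub.1 hv
  by_cases hba : b ≤ a
  · exact inner_left_of_mem_orthogonal hv_mem (hu_perp b (hba.lt_of_not_ge hab))
  induction a using WithTop.recTopCoe with
  | top => exact absurd le_top hba
  | coe a =>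
    induction b using WithTop.recTopCoe with
    | top => exact absurd le_top hab
    | coe b =>
      exact inner_eq_zero_of_intersectionProperty hint (mt WithTop.coe_le_coe.2 hab) hu_mem
        (fun c hc ↦ hu_perp c (WithTop.coe_lt_coe.2 hc)) hv_mem

theorem interactionSub_isOrtho (hint : IntersectionProperty H) {a b : WithTop A}
    (hab : a ≠ b) : interactionSub H a ⟂ interactionSub H b := by
  by_cases hle : a ≤ b
  · exact (interactionSub_isOrtho_of_not_le hint fun hba ↦ hab (hle.antisymm hba)).symm
  · exact interactionSub_isOrtho_of_not_le hint hle

end interactionSub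

theorem interactionSub_pairwise_orthogonal_of_intersectionProperty_general
    {A : Type*} [PartialOrder A]
    (H : A → Submodule 𝕜 E)
    (hint : IntersectionProperty H) :
    (∀ a b : WithTop A, a ≠ b →
        ∀ u ∈ interactionSub H a, ∀ v ∈ interactionSub H b, (inner 𝕜 u v : 𝕜) = 0) ∧
    (∀ a b : WithTop A, a ≠ b →
        (projC (interactionSub H a)).comp (projC (interactionSub H b)) = 0) ∧
    (∀ a : WithTop A,
        (projC (interactionSub H a)).comp (projC (interactionSub H a)) =
          projC (interactionSub H a)) :=
  ⟨fun _ _ hab _ hu _ hv ↦ (interactionSub_isOrtho hint hab).inner_eq hu hv,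
    fun _ _ hab ↦ projC_comp_projC_of_isOrtho (interactionSub_isOrtho hint hab),
    fun a ↦ projC_comp_self (interactionSub H a)⟩

/-- If a monotone family of closed subspaces satisfies the intersection
property, then the subspaces `S_a = H_a ∩ ⋂_{b < a} H_b^⊥` (for `a ∈ A⁺`) are pairwise
orthogonal; equivalently, the orthogonal projections `s_a^⊥` onto the `S_a` satisfy
`s_a^⊥ ∘ s_b^⊥ = 0` for `a ≠ b` and `s_a^⊥ ∘ s_a^⊥ = s_a^⊥`. -/
theorem interactionSub_pairwise_orthogonal_of_intersectionProperty
    {A : Type*} [PartialOrder A]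
    (H : A → Submodule 𝕜 E)
    (hclosed : ∀ a, IsClosed ((H a : Submodule 𝕜 E) : Set E))
    (hmono : Monotone H)
    (hint : IntersectionProperty H) :
    (∀ a b : WithTop A, a ≠ b →
        ∀ u ∈ interactionSub H a, ∀ v ∈ interactionSub H b, (inner 𝕜 u v : 𝕜) = 0) ∧
    (∀ a b : WithTop A, a ≠ b →
        (projC (interactionSub H a)).comp (projC (interactionSub H b)) = 0) ∧
    (∀ a : WithTop A,
        (projC (interactionSub H a)).comp (projC (interactionSub H a)) =
          projC (interactionSub H a)) :=
  interactionSub_pairwise_orthogonal_of_intersectionProperty_general H hint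
end

section
/- Let A be a finite poset with A⁺ its extension by a greatest element, H a Hilbert space, (H_a)_{a∈A} a monotone family of closed subspaces of H with H_1 := H, and π_a the orthogonal projection onto H_a. Suppose there exist continuous linear operators (s_a)_{a∈A⁺} on H such that s_a ∘ s_b = 0 for a ≠ b, s_a ∘ s_a = s_a, Σ_{a∈A⁺} s_a = id_H, and π_a = Σ_{b∈A⁺, b≤a} s_b for every a ∈ A⁺. Then each s_a equals the orthogonal projection s_a^⊥ onto S_a := H_a ∩ ⋂_{b∈A⁺, b<a} H_b^⊥, and the family (H_a)_{a∈A} is decomposable. -/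
open Submodule

variable {𝕜 E : Type*} [RCLike 𝕜] [NormedAddCommGroup E] [InnerProductSpace 𝕜 E]
  [CompleteSpace E]

instance {A : Type*} [Fintype A] : Fintype (WithTop A) :=
  inferInstanceAs (Fintype (Option A))

/-!
The hypotheses say that the `s a` form a complete family of orthogonal idempotents whose partial
sums over the down-sets `{b ≤ a}` are the orthogonal projections `π_a`. Since
`s a = π_a - ∑_{b < a} s b`, well-founded induction makes every `s a` self-adjoint, so `s a` is
the orthogonal projection onto its range. Orthogonality gives `π_b s_a = [a ≤ b] s_a` and
`s_b π_a = [b ≤ a] s_b`, which identify that range with `S_a`. The ranges of the `s a` are then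
pairwise orthogonal closed subspaces, and the range of each partial sum `π_a` is the span of the
ranges of its terms.
-/

open ContinuousLinearMap

namespace OrthogonalIdempotents

variable {R ι : Type*} [Semiring R] {e : ι → R}

lemma sum_mul_of_mem (he : OrthogonalIdempotents e) {i : ι} {t : Finset ι} (h : i ∈ t) :
    (∑ j ∈ t, e j) * e i = e i := by
  classical
  simp [Finset.sum_mul, he.mul_eq, h]

lemma sum_mul_of_notMem (he : OrthogonalIdempotents e) {i : ι} {t : Finset ι} (h : i ∉ t) :
    (∑ j ∈ t, e j) * e i = 0 := by
  classical
  simp [Finset.sum_mul, he.mul_eq, h]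

lemma range_sum {M : Type*} [TopologicalSpace M] [AddCommMonoid M] [ContinuousAdd M]
    [Module R M] {e : ι → M →L[R] M} (he : OrthogonalIdempotents e) (t : Finset ι) :
    (∑ i ∈ t, e i).range = ⨆ i ∈ t, (e i).range := by
  refine le_antisymm ?_ (iSup₂_le fun i hi => ?_)
  · rintro _ ⟨x, rfl⟩
    rw [coe_coe, sum_apply]
    exact Submodule.sum_mem _ fun i hi =>
      le_iSup₂ (f := fun i (_ : i ∈ t) => (e i).range) i hi ⟨x, rfl⟩
  · rintro _ ⟨x, rfl⟩
    exact ⟨e i x, by rw [coe_coe, coe_coe, ← mul_apply_eq_comp, he.sum_mul_of_mem hi]⟩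

end OrthogonalIdempotents

theorem isSelfAdjoint_of_isSelfAdjoint_sum_le {R ι : Type*} [AddCommGroup R] [StarAddMonoid R]
    [PartialOrder ι] [Fintype ι] [DecidableRel ((· ≤ ·) : ι → ι → Prop)] {e : ι → R}
    (h : ∀ a, IsSelfAdjoint (∑ b ∈ Finset.univ.filter (· ≤ a), e b)) (a : ι) :
    IsSelfAdjoint (e a) := by
  classical
  induction a using WellFoundedLT.induction with
  | ind a ih =>
    have hsplit : e a = ∑ b ∈ Finset.univ.filter (· ≤ a), e b
        - ∑ b ∈ Finset.univ.filter (· < a), e b := by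
      rw [eq_sub_iff_add_eq, ← Finset.sum_insert (by simp)]
      congr 1
      ext b
      simp [le_iff_lt_or_eq, or_comm]
    rw [hsplit]
    exact (h a).sub (isSelfAdjoint_sum _ fun b hb => ih b (Finset.mem_filter.mp hb).2)

theorem WithTop.biSup_le_coe {α β : Type*} [Preorder α] [CompleteLattice β]
    (f : WithTop α → β) (a : α) :
    ⨆ b ∈ {b : α | b ≤ a}, f b = ⨆ b ∈ {b : WithTop α | b ≤ a}, f b := by
  refine le_antisymm (iSup₂_le fun b hb => ?_) (iSup₂_le fun b hb => ?_)
  · exact le_iSup₂ (f := fun b (_ : b ∈ {b : WithTop α | b ≤ a}) => f b) (b : WithTop α)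
      (WithTop.coe_le_coe.mpr hb)
  · induction b using WithTop.recTopCoe with
    | top => exact absurd hb (by simp)
    | coe b =>
      exact le_iSup₂ (f := fun b (_ : b ∈ {b : α | b ≤ a}) => f b) b
        (WithTop.coe_le_coe.mp hb)

section Projection

lemma isStarProjection_projC (K : Submodule 𝕜 E) : IsStarProjection (projC K) :=
  haveI : CompleteSpace K.topologicalClosure := K.isClosed_topologicalClosure.completeSpace_coe
  isStarProjection_starProjection

lemma range_projC (K : Submodule 𝕜 E) : (projC K).range = K.topologicalClosure :=
  haveI : CompleteSpace K.topologicalClosure := K.isClosed_topologicalClosure.completeSpace_coe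
  range_starProjection _

lemma projC_apply_eq_self_iff {K : Submodule 𝕜 E} (hK : IsClosed (K : Set E)) {x : E} :
    projC K x = x ↔ x ∈ K :=
  haveI : CompleteSpace K.topologicalClosure := K.isClosed_topologicalClosure.completeSpace_coe
  starProjection_eq_self_iff.trans (by rw [hK.submodule_topologicalClosure_eq])

lemma projC_apply_eq_zero_iff {K : Submodule 𝕜 E} (hK : IsClosed (K : Set E)) {x : E} :
    projC K x = 0 ↔ x ∈ Kᗮ :=
  haveI : CompleteSpace K.topologicalClosure := K.isClosed_topologicalClosure.completeSpace_coe
  (starProjection_apply_eq_zero_iff _).trans (by rw [hK.submodule_topologicalClosure_eq])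

lemma IsStarProjection.eq_projC_range {p : E →L[𝕜] E} (hp : IsStarProjection p) :
    p = projC p.range :=
  ContinuousLinearMap.IsStarProjection.ext hp (isStarProjection_projC _) <| by
    rw [range_projC,
      (IsIdempotentElem.isClosed_range hp.isIdempotentElem).submodule_topologicalClosure_eq]

lemma isOrtho_range_of_mul_eq_zero {p q : E →L[𝕜] E} (hp : IsSelfAdjoint p) (hpq : p * q = 0) :
    p.range ⟂ q.range := by
  rw [isOrtho_iff_inner_eq]
  rintro _ ⟨x, rfl⟩ _ ⟨y, rfl⟩
  rw [coe_coe, coe_coe, ← adjoint_inner_right, hp.adjoint_eq, ← mul_apply_eq_comp, hpq,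
    zero_apply, inner_zero_right]

end Projection

section Interaction

variable {ι : Type*} [PartialOrder ι] [Fintype ι]
  [DecidableRel ((· ≤ ·) : ι → ι → Prop)] {K : ι → Submodule 𝕜 E}
  {s : ι → E →L[𝕜] E}

theorem range_eq_inf_iInf_orthogonal (hK : ∀ a, IsClosed (K a : Set E))
    (hs : CompleteOrthogonalIdempotents s)
    (hproj : ∀ a, projC (K a) = ∑ b ∈ Finset.univ.filter (· ≤ a), s b) (a : ι) :
    (s a).range = K a ⊓ ⨅ b ∈ {b | b < a}, (K b)ᗮ := by
  ext x
  simp only [Submodule.mem_inf, Submodule.mem_iInf, Set.mem_ofPred_eq,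
    ← projC_apply_eq_self_iff (hK _), ← projC_apply_eq_zero_iff (hK _)]
  constructor
  · rintro ⟨y, rfl⟩
    refine ⟨?_, fun b hba => ?_⟩
    · rw [coe_coe, ← mul_apply_eq_comp, hproj, hs.sum_mul_of_mem (by simp)]
    · rw [coe_coe, ← mul_apply_eq_comp, hproj, hs.sum_mul_of_notMem (by simpa using hba.not_ge),
        zero_apply]
  · rintro ⟨hxa, hxb⟩
    have hvanish : ∀ b ≠ a, s b x = 0 := by
      intro b hba
      by_cases hle : b ≤ a
      · calc s b x = (s b * projC (K b)) x := by rw [hproj, hs.mul_sum_of_mem (by simp)]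
          _ = 0 := by rw [mul_apply_eq_comp, hxb b (lt_of_le_of_ne hle hba), map_zero]
      · calc s b x = (s b * projC (K a)) x := by rw [mul_apply_eq_comp, hxa]
          _ = 0 := by rw [hproj, hs.mul_sum_of_notMem (by simpa using hle), zero_apply]
    refine ⟨x, ?_⟩
    calc s a x = ∑ b, s b x := (Finset.sum_eq_single a (fun b _ => hvanish b) (by simp)).symm
      _ = x := by rw [← sum_apply, hs.complete, one_apply_eq_self]

theorem isSelfAdjoint_of_projC_eq_sum
    (hproj : ∀ a, projC (K a) = ∑ b ∈ Finset.univ.filter (· ≤ a), s b) (a : ι) :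
    IsSelfAdjoint (s a) :=
  isSelfAdjoint_of_isSelfAdjoint_sum_le
    (fun a => hproj a ▸ (isStarProjection_projC _).isSelfAdjoint) a

theorem eq_projC_inf_iInf_orthogonal (hK : ∀ a, IsClosed (K a : Set E))
    (hs : CompleteOrthogonalIdempotents s)
    (hproj : ∀ a, projC (K a) = ∑ b ∈ Finset.univ.filter (· ≤ a), s b) (a : ι) :
    s a = projC (K a ⊓ ⨅ b ∈ {b | b < a}, (K b)ᗮ) := by
  rw [← range_eq_inf_iInf_orthogonal hK hs hproj a]
  exact IsStarProjection.eq_projC_range ⟨hs.idem a, isSelfAdjoint_of_projC_eq_sum hproj a⟩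

end Interaction

theorem decomposable_of_range_sum_eq {A : Type*} [PartialOrder A] [Fintype A]
    [DecidableRel ((· ≤ ·) : A → A → Prop)] {H : A → Submodule 𝕜 E}
    {s : WithTop A → E →L[𝕜] E}
    (hclosed : ∀ a, IsClosed (H a : Set E))
    (hs : CompleteOrthogonalIdempotents s) (hsa : ∀ a, IsSelfAdjoint (s a))
    (hH : ∀ a : A, (∑ b ∈ Finset.univ.filter (· ≤ (a : WithTop A)), s b).range = H a) :
    Decomposable H := by
  refine ⟨fun a => (s a).range, fun a => IsIdempotentElem.isClosed_range (hs.idem a),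
    fun a b hab => isOrtho_iff_inner_eq.mp (isOrtho_range_of_mul_eq_zero (hsa a) (hs.ortho hab)),
    ?_, fun a => ?_⟩
  · have := hs.range_sum Finset.univ
    simp only [hs.complete, Finset.mem_univ, iSup_pos, toLinearMap_one, Module.End.one_eq_id,
      LinearMap.range_id] at this
    rw [← this]
    exact top_unique (Submodule.le_topologicalClosure _)
  · rw [WithTop.biSup_le_coe (fun b => (s b).range),
      ← (hclosed a).submodule_topologicalClosure_eq, ← hH a, hs.range_sum]
    simp only [Finset.mem_filter, Finset.mem_univ, true_and, Set.mem_ofPred_eq]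

theorem decomposable_of_projector_decomposition_general
    {A : Type*} [PartialOrder A] [Fintype A]
    [DecidableRel ((· ≤ ·) : A → A → Prop)]
    (H : A → Submodule 𝕜 E)
    (hclosed : ∀ a, IsClosed ((H a : Submodule 𝕜 E) : Set E))
    (s : WithTop A → (E →L[𝕜] E))
    (hzero : ∀ a b : WithTop A, a ≠ b → (s a).comp (s b) = 0)
    (hidem : ∀ a : WithTop A, (s a).comp (s a) = s a)
    (hsum : ∑ a : WithTop A, s a = ContinuousLinearMap.id 𝕜 E)
    (hproj : ∀ a : WithTop A,
      projC (extFam H a) = ∑ b ∈ Finset.univ.filter (fun b => b ≤ a), s b) :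
    (∀ a : WithTop A, s a = projC (interactionSub H a)) ∧ Decomposable H := by
  have hs : CompleteOrthogonalIdempotents s := ⟨⟨hidem, hzero⟩, hsum⟩
  have hclosed' : ∀ a, IsClosed (extFam H a : Set E) := WithTop.recTopCoe isClosed_univ hclosed
  refine ⟨eq_projC_inf_iInf_orthogonal hclosed' hs hproj,
    decomposable_of_range_sum_eq hclosed hs (isSelfAdjoint_of_projC_eq_sum hproj) fun a => ?_⟩
  rw [← hproj, range_projC]
  exact (hclosed a).submodule_topologicalClosure_eq

/-- Over a finite poset `A`, if the orthogonal projections `π_a` onto the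
`H_a` (with `H_1 := H` for the adjoined top element) admit a decomposition by a family of
operators `(s_a)_{a ∈ A⁺}` with `s_a ∘ s_b = 0` for `a ≠ b`, `s_a` idempotent,
`Σ_a s_a = id` and `π_a = Σ_{b ≤ a} s_b`, then each `s_a` is the orthogonal projection onto
`S_a = H_a ∩ ⋂_{b < a} H_b^⊥` and the family `(H_a)_{a ∈ A}` is decomposable. -/
theorem decomposable_of_projector_decomposition
    {A : Type*} [PartialOrder A] [Fintype A] [DecidableEq A]
    [DecidableRel ((· ≤ ·) : A → A → Prop)]
    (H : A → Submodule 𝕜 E)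
    (hclosed : ∀ a, IsClosed ((H a : Submodule 𝕜 E) : Set E))
    (hmono : Monotone H)
    (s : WithTop A → (E →L[𝕜] E))
    (hzero : ∀ a b : WithTop A, a ≠ b → (s a).comp (s b) = 0)
    (hidem : ∀ a : WithTop A, (s a).comp (s a) = s a)
    (hsum : ∑ a : WithTop A, s a = ContinuousLinearMap.id 𝕜 E)
    (hproj : ∀ a : WithTop A,
      projC (extFam H a) = ∑ b ∈ Finset.univ.filter (fun b => b ≤ a), s b) :
    (∀ a : WithTop A, s a = projC (interactionSub H a)) ∧ Decomposable H :=
  decomposable_of_projector_decomposition_general H hclosed s hzero hidem hsum hproj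
end
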